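/- arXiv:1612.06809 — 2 statements merged into one kernel-verified Lean document; each statement's English description precedes it below -/
import Mathlib

section
/- For any row vector x ∈ C^{1×d}, matrix Y ∈ C^{d×d}, column vector z = e_d (last standard basis vector), and b ≥ 0, the integral ∫_0^b x e^{tY} z dt equals the (1, d+1) entry of e^{b Y^I}, where Y^I is the (d+1)×(d+1) block matrix [[0, x],[0, Y]]. -/
/-!
The lower-left block of `Yᴵ` vanishes, so the lower-right block of `e^{t Yᴵ}` is `e^{tY}` and the
`(1, d+1)` entry of `d/dt e^{t Yᴵ} = Yᴵ e^{t Yᴵ}` is `(x e^{tY})_d`. The identity is then the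
fundamental theorem of calculus, since the `(1, d+1)` entry of `e^{0 Yᴵ} = 1` is zero.
-/

open Matrix NormedSpace intervalIntegral

namespace Matrix

variable {m n α 𝕂 : Type*} [Fintype m] [Fintype n] [DecidableEq m] [DecidableEq n]

theorem fromBlocks_zero₂₁_pow [Semiring α] (A : Matrix m m α) (B : Matrix m n α)
    (D : Matrix n n α) (k : ℕ) :
    ∃ C, fromBlocks A B 0 D ^ k = fromBlocks (A ^ k) C 0 (D ^ k) := by
  induction k with
  | zero => exact ⟨0, by simp [fromBlocks_one]⟩
  | succ k ih =>
    obtain ⟨C, hC⟩ := ih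
    exact ⟨A ^ k * B + C * D, by simp [pow_succ, hC, fromBlocks_multiply]⟩

variable [RCLike 𝕂]

open scoped Norms.Operator in
theorem toBlocks₂₂_exp_fromBlocks_zero₂₁ (A : Matrix m m 𝕂) (B : Matrix m n 𝕂)
    (D : Matrix n n 𝕂) : (exp (fromBlocks A B 0 D)).toBlocks₂₂ = exp D := by
  -- instance search finds completeness only for the product uniformity, not the operator norm's
  have hM := @exp_series_hasSum_exp' 𝕂 _ _ _ _ _ _ (FiniteDimensional.complete 𝕂 _)
    (fromBlocks A B 0 D)
  have hD := @exp_series_hasSum_exp' 𝕂 _ _ _ _ _ _ (FiniteDimensional.complete 𝕂 _) D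
  ext i j
  refine (Pi.hasSum.1 (Pi.hasSum.1 hM (.inr i)) (.inr j)).unique
    ((Pi.hasSum.1 (Pi.hasSum.1 hD i) j).congr_fun fun k => ?_)
  obtain ⟨C, hC⟩ := fromBlocks_zero₂₁_pow A B D k
  simp [hC]

theorem toBlocks₁₂_fromBlocks_zero_mul_exp (B : Matrix m n 𝕂) (D : Matrix n n 𝕂) (c : 𝕂) :
    (fromBlocks (0 : Matrix m m 𝕂) B 0 D *
        exp (c • fromBlocks (0 : Matrix m m 𝕂) B 0 D)).toBlocks₁₂ = B * exp (c • D) := by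
  rw [← fromBlocks_toBlocks (exp _), fromBlocks_multiply, toBlocks_fromBlocks₁₂, fromBlocks_smul,
    smul_zero, smul_zero, toBlocks₂₂_exp_fromBlocks_zero₂₁, Matrix.zero_mul, zero_add]

open scoped Norms.Operator in
theorem hasDerivAt_exp_ofReal_smul_apply (M : Matrix m m 𝕂) (i j : m) (t : ℝ) :
    HasDerivAt (fun s : ℝ => exp ((s : 𝕂) • M) i j) ((M * exp ((t : 𝕂) • M)) i j) t := by
  have h := hasDerivAt_exp_smul_const' (𝕂 := ℝ) M t
  simp only [← RCLike.real_smul_eq_coe_smul]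
  exact hasDerivAt_pi.1 (hasDerivAt_pi.1 h i) j

theorem continuous_exp_ofReal_smul (M : Matrix m m 𝕂) :
    Continuous fun s : ℝ => exp ((s : 𝕂) • M) :=
  continuous_pi fun i => continuous_pi fun j => continuous_iff_continuousAt.2 fun t =>
    (hasDerivAt_exp_ofReal_smul_apply M i j t).continuousAt

end Matrix

theorem me_integral_augmentation_general {d : ℕ}
    (x : Matrix (Fin 1) (Fin (d + 1)) ℂ) (Y : Matrix (Fin (d + 1)) (Fin (d + 1)) ℂ)
    {b : ℝ} :
    (∫ t in (0 : ℝ)..b, (x * NormedSpace.exp ((t : ℂ) • Y)) 0 (Fin.last d)) =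
      NormedSpace.exp ((b : ℂ) • Matrix.fromBlocks (0 : Matrix (Fin 1) (Fin 1) ℂ) x 0 Y)
        (Sum.inl 0) (Sum.inr (Fin.last d)) := by
  set M := fromBlocks (0 : Matrix (Fin 1) (Fin 1) ℂ) x 0 Y
  have hderiv (t : ℝ) : HasDerivAt (fun s : ℝ => exp ((s : ℂ) • M) (.inl 0) (.inr (Fin.last d)))
      ((x * exp ((t : ℂ) • Y)) 0 (Fin.last d)) t := by
    rw [← toBlocks₁₂_fromBlocks_zero_mul_exp x Y t]
    exact hasDerivAt_exp_ofReal_smul_apply M _ _ t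
  have hint : IntervalIntegrable (fun t : ℝ => (x * exp ((t : ℂ) • Y)) 0 (Fin.last d))
      MeasureTheory.volume 0 b :=
    Continuous.intervalIntegrable
      ((continuous_const.matrix_mul (continuous_exp_ofReal_smul Y)).matrix_elem _ _) _ _
  rw [integral_eq_sub_of_hasDerivAt (fun t _ => hderiv t) hint]
  simp

/-- Integration of a ME-function via matrix augmentation:
`∫_0^b x e^{tY} e_d dt` equals the `(1, d+1)` entry of `e^{b Yᴵ}`
where `Yᴵ = [[0, x],[0, Y]]`. -/
theorem me_integral_augmentation {d : ℕ}
    (x : Matrix (Fin 1) (Fin (d + 1)) ℂ) (Y : Matrix (Fin (d + 1)) (Fin (d + 1)) ℂ)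
    {b : ℝ} (hb : 0 ≤ b) :
    (∫ t in (0 : ℝ)..b, (x * NormedSpace.exp ((t : ℂ) • Y)) 0 (Fin.last d)) =
      NormedSpace.exp ((b : ℂ) • Matrix.fromBlocks (0 : Matrix (Fin 1) (Fin 1) ℂ) x 0 Y)
        (Sum.inl 0) (Sum.inr (Fin.last d)) :=
  me_integral_augmentation_general x Y
end

section
/- Let f_j(t) = x_j e^{tY_j} z_j, j = 1,2, with all eigenvalues of Y_1 ⊕ Y_2 having negative real part. Then ∫_0^∞ f_1(t) f_2(t) dt = −(x_1 ⊗ x_2)(Y_1 ⊕ Y_2)^{−1}(z_1 ⊗ z_2). -/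
/-!
Writing `A = Y₁ ⊗ I + I ⊗ Y₂`, the commuting summands give `e^{tY₁} ⊗ e^{tY₂} = e^{tA}`, so the
integrand is `(x₁ ⊗ x₂) e^{tA} (z₁ ⊗ z₂)` by the mixed-product rule. Every eigenvalue of `e^A` is
`e^λ` for an eigenvalue `λ` of `A` (a common eigenvector of the commuting `A` and `e^A` shows this),
so the spectral radius of `e^A` is below `1`; Gelfand's formula then makes `‖e^{tA}‖` decay
exponentially, and `d/dt e^{tA} = e^{tA} A` integrates to `(∫₀^∞ e^{tA} dt) A = -1`.
-/

open Filter Topology NormedSpace Matrix MeasureTheory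
open scoped Kronecker NNReal ENNReal

-- Any norm makes the matrices a Banach algebra; none of the statements below depend on the choice.
attribute [local instance] Matrix.linftyOpNormedAddCommGroup Matrix.linftyOpNormedRing
  Matrix.linftyOpNormedAlgebra

section BanachAlgebra

variable {𝔸 : Type*} [NormedRing 𝔸] [NormedAlgebra ℂ 𝔸] [CompleteSpace 𝔸]

theorem spectrum.exists_norm_pow_le_of_spectralRadius_lt (a : 𝔸) {r : ℝ≥0}
    (h : spectralRadius ℂ a < r) : ∃ C, ∀ k : ℕ, ‖a ^ k‖ ≤ C * r ^ k := by
  have hr : 0 < (r : ℝ) := by exact_mod_cast zero_le.trans_lt h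
  have hev : ∀ᶠ k : ℕ in atTop, ‖a ^ k‖ / r ^ k ≤ 1 := by
    filter_upwards [(pow_norm_pow_one_div_tendsto_nhds_spectralRadius a).eventually_lt_const h,
      eventually_ge_atTop 1] with k hk hk1
    rw [ENNReal.ofReal_lt_coe_iff (by positivity), one_div,
      Real.rpow_inv_lt_iff_of_pos (norm_nonneg _) hr.le (by positivity), Real.rpow_natCast] at hk
    exact div_le_one_of_le₀ hk.le (by positivity)
  obtain ⟨C, hC⟩ := (isBoundedUnder_of_eventually_le hev).bddAbove_range
  exact ⟨C, fun k => (div_le_iff₀ (by positivity)).mp (hC ⟨k, rfl⟩)⟩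

variable [NormedAlgebra ℚ 𝔸]

theorem continuous_exp_ofReal_smul (a : 𝔸) : Continuous fun t : ℝ => exp ((t : ℂ) • a) :=
  exp_continuous.comp (by fun_prop)

theorem exists_norm_exp_smul_le_of_spectralRadius_exp_lt_one (a : 𝔸)
    (h : spectralRadius ℂ (exp a) < 1) :
    ∃ C ε : ℝ, 0 < ε ∧ ∀ t : ℝ, 0 ≤ t → ‖exp ((t : ℂ) • a)‖ ≤ C * Real.exp (-ε * t) := by
  obtain ⟨r, hρr, hr1⟩ := ENNReal.lt_iff_exists_nnreal_btwn.mp h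
  obtain ⟨C, hC⟩ := spectrum.exists_norm_pow_le_of_spectralRadius_lt (exp a) hρr
  have hr0 : 0 < (r : ℝ) := by exact_mod_cast zero_le.trans_lt hρr
  have hr1 : (r : ℝ) < 1 := by exact_mod_cast hr1
  have hC0 : 0 ≤ C := by simpa using (norm_nonneg _).trans (hC 0)
  obtain ⟨M, hM⟩ := (isCompact_Icc (a := (0 : ℝ)) (b := 1)).exists_bound_of_continuousOn
    (continuous_exp_ofReal_smul a).continuousOn
  have hM0 : 0 ≤ M := (norm_nonneg _).trans (hM 0 ⟨le_rfl, zero_le_one⟩)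
  refine ⟨C * M / r, -Real.log r, neg_pos.mpr (Real.log_neg hr0 hr1), fun t ht => ?_⟩
  set k := ⌊t⌋₊
  have hsplit : exp ((t : ℂ) • a) = exp a ^ k * exp (((t - k : ℝ) : ℂ) • a) := by
    rw [← NormedSpace.exp_nsmul,
      ← NormedSpace.exp_add_of_commute ((Commute.refl a).smul_left _ |>.smul_right _),
      ← Nat.cast_smul_eq_nsmul ℂ, ← add_smul]
    push_cast
    ring_nf
  -- `k > t - 1`, so `r ^ k ≤ r ^ (t - 1) = exp (t log r) / r`
  have hrk : (r : ℝ) ^ k ≤ Real.exp (-(-Real.log r) * t) / r := by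
    rw [neg_neg, ← Real.rpow_def_of_pos hr0, ← Real.rpow_sub_one hr0.ne', ← Real.rpow_natCast]
    exact Real.rpow_le_rpow_of_exponent_ge hr0 hr1.le (by linarith [Nat.lt_floor_add_one t])
  calc ‖exp ((t : ℂ) • a)‖ ≤ ‖exp a ^ k‖ * ‖exp (((t - k : ℝ) : ℂ) • a)‖ :=
        hsplit ▸ norm_mul_le _ _
    _ ≤ (C * r ^ k) * M := by
        gcongr
        · exact hC k
        · exact hM _ ⟨by linarith [Nat.floor_le ht], by linarith [Nat.lt_floor_add_one t]⟩
    _ ≤ C * (Real.exp (-(-Real.log r) * t) / r) * M := by gcongr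
    _ = C * M / r * Real.exp (-(-Real.log r) * t) := by ring

theorem integrableOn_exp_smul_Ioi_of_spectralRadius_exp_lt_one (a : 𝔸)
    (h : spectralRadius ℂ (exp a) < 1) :
    IntegrableOn (fun t : ℝ => exp ((t : ℂ) • a)) (Set.Ioi 0) := by
  obtain ⟨C, ε, hε, hC⟩ := exists_norm_exp_smul_le_of_spectralRadius_exp_lt_one a h
  refine ((exp_neg_integrableOn_Ioi 0 hε).const_mul C).mono'
    (continuous_exp_ofReal_smul a).aestronglyMeasurable ?_
  filter_upwards [ae_restrict_mem measurableSet_Ioi] with t ht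
  exact hC t (le_of_lt ht)

theorem tendsto_exp_smul_atTop_of_spectralRadius_exp_lt_one (a : 𝔸)
    (h : spectralRadius ℂ (exp a) < 1) :
    Tendsto (fun t : ℝ => exp ((t : ℂ) • a)) atTop (𝓝 0) := by
  obtain ⟨C, ε, hε, hC⟩ := exists_norm_exp_smul_le_of_spectralRadius_exp_lt_one a h
  have hlim : Tendsto (fun t : ℝ => C * Real.exp (-ε * t)) atTop (𝓝 0) := by
    simpa using (Real.tendsto_exp_atBot.comp
      (tendsto_id.const_mul_atTop_of_neg (neg_neg_of_pos hε))).const_mul C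
  exact squeeze_zero_norm' ((eventually_ge_atTop 0).mono hC) hlim

theorem integral_exp_smul_Ioi_mul_of_spectralRadius_exp_lt_one (a : 𝔸)
    (h : spectralRadius ℂ (exp a) < 1) :
    (∫ t in Set.Ioi (0 : ℝ), exp ((t : ℂ) • a)) * a = -1 := by
  have hint := integrableOn_exp_smul_Ioi_of_spectralRadius_exp_lt_one a h
  have hderiv (t : ℝ) :
      HasDerivAt (fun u : ℝ => exp ((u : ℂ) • a)) (exp ((t : ℂ) • a) * a) t := by
    have := (hasDerivAt_exp_smul_const a (t : ℂ)).scomp t Complex.ofRealCLM.hasDerivAt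
    rwa [Complex.ofRealCLM_apply, Complex.ofReal_one, one_smul] at this
  have hftc := integral_Ioi_of_hasDerivAt_of_tendsto
    (continuous_exp_ofReal_smul a).continuousWithinAt (fun t _ => hderiv t) (hint.mul_const a)
    (tendsto_exp_smul_atTop_of_spectralRadius_exp_lt_one a h)
  rw [← integral_mul_const_of_integrable hint, hftc]
  simp

end BanachAlgebra

theorem Module.End.exists_hasEigenvector_mem_eigenspace_of_commute {K V : Type*} [Field K]
    [IsAlgClosed K] [AddCommGroup V] [Module K V] [FiniteDimensional K V] {f g : Module.End K V}
    (h : Commute f g) {μ : K} (hμ : g.HasEigenvalue μ) :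
    ∃ l v, f.HasEigenvector l v ∧ v ∈ g.eigenspace μ := by
  have hmaps : Set.MapsTo f (g.eigenspace μ) (g.eigenspace μ) :=
    mapsTo_genEigenspace_of_comm h.symm μ 1
  have : Nontrivial (g.eigenspace μ) := Submodule.nontrivial_iff_ne_bot.mpr hμ
  obtain ⟨l, hl⟩ := Module.End.exists_eigenvalue (f.restrict hmaps)
  obtain ⟨⟨v, hv⟩, hw⟩ := hl.exists_hasEigenvector
  refine ⟨l, v, ⟨mem_eigenspace_iff.mpr (congrArg Subtype.val hw.apply_eq_smul), ?_⟩, hv⟩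
  simpa using hw.2

namespace Matrix

variable {n : Type*} [Fintype n] [DecidableEq n]

theorem exp_mulVec_of_mulVec_eq_smul {𝕂 : Type*} [RCLike 𝕂] {A : Matrix n n 𝕂} {v : n → 𝕂}
    {l : 𝕂} (h : A *ᵥ v = l • v) : exp A *ᵥ v = exp l • v := by
  have hpow (k : ℕ) : A ^ k *ᵥ v = l ^ k • v := by
    induction k with
    | zero => simp
    | succ k ih => rw [pow_succ, ← mulVec_mulVec, h, mulVec_smul, ih, smul_smul, pow_succ']
  have hA := (exp_series_hasSum_exp' (𝕂 := 𝕂) A).map (mulVec.addMonoidHomLeft v)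
    (continuous_id.matrix_mulVec continuous_const)
  have hl := (exp_series_hasSum_exp' (𝕂 := 𝕂) l).smul_const v
  refine hA.unique (hl.congr_fun fun k => ?_)
  simp [mulVec.addMonoidHomLeft, smul_mulVec, hpow, smul_smul]

theorem spectrum_exp_subset (A : Matrix n n ℂ) :
    spectrum ℂ (exp A) ⊆ Complex.exp '' spectrum ℂ A := by
  intro μ hμ
  rw [← spectrum_toLin', ← Module.End.hasEigenvalue_iff_mem_spectrum] at hμ
  have hcomm : Commute A.toLin' (exp A).toLin' :=
    ((Commute.refl A).exp_right).map toLinAlgEquiv'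
  obtain ⟨l, v, hv, hvμ⟩ :=
    Module.End.exists_hasEigenvector_mem_eigenspace_of_commute hcomm hμ
  have hAv : A *ᵥ v = l • v := by simpa using hv.apply_eq_smul
  have hμv : exp A *ᵥ v = μ • v := by simpa using Module.End.mem_eigenspace_iff.mp hvμ
  refine ⟨l, spectrum_toLin' A ▸ (Module.End.hasEigenvalue_of_hasEigenvector hv).mem_spectrum,
    smul_left_injective ℂ hv.2 ?_⟩
  simp only [← hμv, Complex.exp_eq_exp_ℂ, exp_mulVec_of_mulVec_eq_smul hAv]

theorem spectralRadius_exp_lt_one {A : Matrix n n ℂ} (hA : ∀ μ ∈ spectrum ℂ A, μ.re < 0) :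
    spectralRadius ℂ (exp A) < 1 := by
  rcases (spectrum ℂ (exp A)).eq_empty_or_nonempty with hempty | ⟨μ₀, hμ₀⟩
  · simp [spectralRadius, hempty]
  rw [spectralRadius, (finite_spectrum _).ciSup_lt_iff ⟨μ₀, hμ₀, by simp⟩]
  rintro _ hμ
  obtain ⟨l, hl, rfl⟩ := spectrum_exp_subset A hμ
  rw [← ENNReal.coe_one, ENNReal.coe_lt_coe, ← NNReal.coe_lt_coe, coe_nnnorm, NNReal.coe_one,
    Complex.norm_exp, Real.exp_lt_one_iff]
  exact hA l hl

section Kronecker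

variable {m : Type*} [Fintype m] [DecidableEq m]
variable {R : Type*} [RCLike R]

theorem exp_kronecker_one (A : Matrix m m R) :
    exp (A ⊗ₖ (1 : Matrix n n R)) = exp A ⊗ₖ (1 : Matrix n n R) := by
  rw [kronecker_one, kronecker_one, exp_blockDiagonal]
  congr 1
  funext i
  exact map_exp (Pi.evalRingHom _ i) (continuous_apply i) _

set_option synthInstance.maxSize 256 in
theorem exp_one_kronecker (B : Matrix n n R) :
    exp ((1 : Matrix m m R) ⊗ₖ B) = (1 : Matrix m m R) ⊗ₖ exp B := by
  rw [one_kronecker, one_kronecker, ← kronecker_one, ← kronecker_one, ← exp_kronecker_one,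
    ← coe_reindexAlgEquiv ℚ R]
  exact (map_exp (reindexAlgEquiv ℚ R (Equiv.prodComm n m)) (continuous_id.matrix_reindex _ _)
    (B ⊗ₖ (1 : Matrix m m R))).symm

theorem exp_kronecker_add_kronecker (A : Matrix m m R) (B : Matrix n n R) :
    exp (A ⊗ₖ (1 : Matrix n n R) + (1 : Matrix m m R) ⊗ₖ B) = exp A ⊗ₖ exp B := by
  have hcomm : Commute (A ⊗ₖ (1 : Matrix n n R)) ((1 : Matrix m m R) ⊗ₖ B) := by
    simp only [Commute, SemiconjBy, ← mul_kronecker_mul, one_mul, mul_one]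
  rw [exp_add_of_commute _ _ hcomm, exp_kronecker_one, exp_one_kronecker, ← mul_kronecker_mul,
    one_mul, mul_one]

end Kronecker

theorem integral_exp_smul_Ioi {A : Matrix n n ℂ} (hA : ∀ μ ∈ spectrum ℂ A, μ.re < 0) :
    ∫ t in Set.Ioi (0 : ℝ), exp ((t : ℂ) • A) = -A⁻¹ := by
  have h := integral_exp_smul_Ioi_mul_of_spectralRadius_exp_lt_one A
    (spectralRadius_exp_lt_one hA)
  rw [inv_eq_left_inv (B := -∫ t in Set.Ioi (0 : ℝ), exp ((t : ℂ) • A))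
    (by rw [neg_mul]; exact neg_eq_iff_eq_neg.mpr h), neg_neg]

theorem integral_Ioi_mul_exp_smul_mul_apply {l p : Type*} {A : Matrix n n ℂ}
    (hA : ∀ μ ∈ spectrum ℂ A, μ.re < 0) (X : Matrix l n ℂ) (Z : Matrix n p ℂ) (i : l) (j : p) :
    ∫ t in Set.Ioi (0 : ℝ), (X * exp ((t : ℂ) • A) * Z) i j = -(X * A⁻¹ * Z) i j := by
  have hint := integrableOn_exp_smul_Ioi_of_spectralRadius_exp_lt_one A
    (spectralRadius_exp_lt_one hA)
  let L : Matrix n n ℂ →ₗ[ℂ] ℂ :=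
    entryLinearMap ℂ ℂ i j ∘ₗ mulRightLinearMap l ℂ Z ∘ₗ mulLeftLinearMap n ℂ X
  calc ∫ t in Set.Ioi (0 : ℝ), (X * exp ((t : ℂ) • A) * Z) i j
      = L (∫ t in Set.Ioi (0 : ℝ), exp ((t : ℂ) • A)) :=
        ContinuousLinearMap.integral_comp_comm ⟨L, L.continuous_of_finiteDimensional⟩ hint
    _ = L (-A⁻¹) := by rw [integral_exp_smul_Ioi hA]
    _ = -(X * A⁻¹ * Z) i j := by simp [L]

end Matrix

/-- Integral of the product of two ME-densities:
`∫_0^∞ f₁(t) f₂(t) dt = -(x₁ ⊗ x₂)(Y₁ ⊕ Y₂)⁻¹(z₁ ⊗ z₂)`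
when the Kronecker sum `Y₁ ⊕ Y₂` is Hurwitz. -/
theorem integral_product_me_densities {d₁ d₂ : ℕ}
    (x₁ : Matrix (Fin 1) (Fin d₁) ℂ) (Y₁ : Matrix (Fin d₁) (Fin d₁) ℂ)
    (z₁ : Matrix (Fin d₁) (Fin 1) ℂ)
    (x₂ : Matrix (Fin 1) (Fin d₂) ℂ) (Y₂ : Matrix (Fin d₂) (Fin d₂) ℂ)
    (z₂ : Matrix (Fin d₂) (Fin 1) ℂ)
    (hspec : ∀ μ ∈ spectrum ℂ
      (Y₁ ⊗ₖ (1 : Matrix (Fin d₂) (Fin d₂) ℂ) + (1 : Matrix (Fin d₁) (Fin d₁) ℂ) ⊗ₖ Y₂),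
      μ.re < 0) :
    (∫ t in Set.Ioi (0 : ℝ),
        (x₁ * NormedSpace.exp ((t : ℂ) • Y₁) * z₁) 0 0 *
          (x₂ * NormedSpace.exp ((t : ℂ) • Y₂) * z₂) 0 0) =
      -(((x₁ ⊗ₖ x₂) *
          (Y₁ ⊗ₖ (1 : Matrix (Fin d₂) (Fin d₂) ℂ) +
            (1 : Matrix (Fin d₁) (Fin d₁) ℂ) ⊗ₖ Y₂)⁻¹ *
          (z₁ ⊗ₖ z₂)) (0, 0) (0, 0)) := by
  set A := Y₁ ⊗ₖ (1 : Matrix (Fin d₂) (Fin d₂) ℂ) + (1 : Matrix (Fin d₁) (Fin d₁) ℂ) ⊗ₖ Y₂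
  have hintegrand (t : ℝ) :
      (x₁ * exp ((t : ℂ) • Y₁) * z₁) 0 0 * (x₂ * exp ((t : ℂ) • Y₂) * z₂) 0 0 =
        ((x₁ ⊗ₖ x₂) * exp ((t : ℂ) • A) * (z₁ ⊗ₖ z₂)) (0, 0) (0, 0) := by
    rw [smul_add, ← smul_kronecker, ← kronecker_smul, exp_kronecker_add_kronecker,
      ← mul_kronecker_mul, ← mul_kronecker_mul]
    rfl
  simp_rw [hintegrand]
  exact integral_Ioi_mul_exp_smul_mul_apply hspec _ _ _ _
end
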